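/- Let l be a nontrivial complete lattice (⊥ ≠ ⊤). For every mv-linear-time property P over AP there exist a safety property P_safe and a liveness property P_live over AP such that P(σ) = P_safe(σ) ⊓ P_live(σ) for every infinite word σ. -/
import Mathlib


/-- The infinite word obtained by prepending the finite word `θ` to the
infinite word `τ`. -/
def prependWord {AP : Type*} (θ : List (Set AP)) (τ : ℕ → Set AP) : ℕ → Set AP :=
  fun n => if h : n < θ.length then θ.get ⟨n, h⟩ else τ (n - θ.length)

/-- The finite prefix `σ|n = (σ 0, …, σ (n-1))` of an infinite word `σ`. -/
def prefixWord {AP : Type*} (σ : ℕ → Set AP) (n : ℕ) : List (Set AP) :=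
  List.ofFn (fun i : Fin n => σ i)

/-- The good-prefix function of `P`: `GPref(P)(θ) = ⨆ τ, P(θ·τ)`. -/
def mvGPref {AP l : Type*} [CompleteLattice l] (P : (ℕ → Set AP) → l)
    (θ : List (Set AP)) : l :=
  ⨆ τ : ℕ → Set AP, P (prependWord θ τ)

/-- `P` is a safety property if `⨅ n, GPref(P)(σ|n) ≤ P(σ)` for every `σ`. -/
def mvIsSafety {AP l : Type*} [CompleteLattice l] (P : (ℕ → Set AP) → l) : Prop :=
  ∀ σ : ℕ → Set AP, (⨅ n : ℕ, mvGPref P (prefixWord σ n)) ≤ P σ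

/-- The closure of `P`: `Closure(P)(σ) = ⨅ n, GPref(P)(σ|n)`. -/
def mvClosure {AP l : Type*} [CompleteLattice l] (P : (ℕ → Set AP) → l) :
    (ℕ → Set AP) → l :=
  fun σ => ⨅ n : ℕ, mvGPref P (prefixWord σ n)

/-- `P` is a liveness property if `Closure(P)(σ) ≠ ⊥` for every `σ`. -/
def mvIsLiveness {AP l : Type*} [CompleteLattice l] (P : (ℕ → Set AP) → l) : Prop :=
  ∀ σ : ℕ → Set AP, mvClosure P σ ≠ ⊥


lemma prepend_prefix {AP : Type*} (σ : ℕ → Set AP) (n : ℕ) :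
    prependWord (prefixWord σ n) (fun k => σ (k + n)) = σ := by
  funext m
  simp only [prependWord, prefixWord, List.length_ofFn]
  split
  · next h => simp [List.get_ofFn]
  · next h => exact congrArg σ (by omega)

lemma self_le_gpref {AP l : Type*} [CompleteLattice l] (P : (ℕ → Set AP) → l)
    (σ : ℕ → Set AP) (n : ℕ) : P σ ≤ mvGPref P (prefixWord σ n) := by
  have := le_iSup (fun τ : ℕ → Set AP => P (prependWord (prefixWord σ n) τ))
    (fun k => σ (k + n))
  rwa [prepend_prefix] at this

lemma self_le_closure {AP l : Type*} [CompleteLattice l] (P : (ℕ → Set AP) → l)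
    (σ : ℕ → Set AP) : P σ ≤ mvClosure P σ :=
  le_iInf fun n => self_le_gpref P σ n

lemma prefix_prepend {AP : Type*} (θ : List (Set AP)) (τ : ℕ → Set AP) :
    prefixWord (prependWord θ τ) θ.length = θ := by
  apply List.ext_get
  · simp [prefixWord]
  · intro i h1 h2
    simp [prefixWord, prependWord, List.get_ofFn]

lemma closure_safety {AP l : Type*} [CompleteLattice l] (P : (ℕ → Set AP) → l) :
    mvIsSafety (mvClosure P) := by
  intro σ
  have key : ∀ n, mvGPref (mvClosure P) (prefixWord σ n) ≤ mvGPref P (prefixWord σ n) := by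
    intro n
    apply iSup_le
    intro τ
    have hlen : (prefixWord σ n).length = n := by simp [prefixWord]
    have h1 : mvClosure P (prependWord (prefixWord σ n) τ) ≤
        mvGPref P (prefixWord (prependWord (prefixWord σ n) τ) n) := iInf_le _ n
    have h2 := prefix_prepend (prefixWord σ n) τ
    rw [hlen] at h2
    rwa [h2] at h1
  calc (⨅ n, mvGPref (mvClosure P) (prefixWord σ n)) ≤ ⨅ n, mvGPref P (prefixWord σ n) :=
        iInf_mono key
    _ = mvClosure P σ := rfl

lemma mvClosure_mono {AP l : Type*} [CompleteLattice l] {P Q : (ℕ → Set AP) → l}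
    (h : ∀ σ, P σ ≤ Q σ) (σ : ℕ → Set AP) : mvClosure P σ ≤ mvClosure Q σ :=
  iInf_mono fun n => iSup_mono fun τ => h _

/-- Over a nontrivial complete lattice, every mv-linear-time property is the
pointwise meet of a safety property and a liveness property. -/
theorem stmt6 {AP l : Type*} [CompleteLattice l] (hnt : (⊥ : l) ≠ ⊤)
    (P : (ℕ → Set AP) → l) :
    ∃ Psafe Plive : (ℕ → Set AP) → l,
      mvIsSafety Psafe ∧ mvIsLiveness Plive ∧
        ∀ σ : ℕ → Set AP, P σ = Psafe σ ⊓ Plive σ := by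
  classical
  refine ⟨mvClosure P, fun σ => if mvClosure P σ ≤ P σ then ⊤ else P σ,
    closure_safety P, ?_, ?_⟩
  · intro σ
    by_cases h : mvClosure P σ ≤ P σ
    · have : (⊤ : l) ≤ mvClosure (fun σ => if mvClosure P σ ≤ P σ then ⊤ else P σ) σ := by
        have := self_le_closure (fun σ => if mvClosure P σ ≤ P σ then ⊤ else P σ) σ
        simpa [h] using this
      intro hb
      exact hnt (by rw [← hb]; exact le_antisymm le_top (hb ▸ this))
    · have hle : mvClosure P σ ≤
          mvClosure (fun σ => if mvClosure P σ ≤ P σ then ⊤ else P σ) σ :=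
        mvClosure_mono (fun τ => by by_cases hh : mvClosure P τ ≤ P τ <;> simp [hh]) σ
      intro hb
      apply h
      have : mvClosure P σ = ⊥ := le_antisymm (hb ▸ hle) bot_le
      rw [this]; exact bot_le
  · intro σ
    by_cases h : mvClosure P σ ≤ P σ
    · simp only [if_pos h, inf_top_eq]
      exact le_antisymm (self_le_closure P σ) h
    · simp only [if_neg h]
      exact (inf_eq_right.mpr (self_le_closure P σ)).symm
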